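/- arXiv:2307.10483 — 2 statements merged into one kernel-verified Lean document; each statement's English description precedes it below -/
import Mathlib

section
/- Let 1 < p ≤ q < ∞, m a positive integer, 0 < R ≤ ∞, θ > -1, and γ with γ - mp + 1 > 0 and θ ≥ γ - mp and p* := (θ+1)p/(γ-mp+1). Then the Hardy-type constant A_{m,0} := sup_{0<t<R} (∫_0^t (t-r)^{(m-1)p*} r^θ dr)^{1/p*} (∫_t^R r^{-γ/(p-1)} dr)^{(p-1)/p} is finite, and satisfies A_{m,0} ≤ (θ+1)^{-1/p*} ((p-1)/(γ-p+1))^{(p-1)/p}. -/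
open MeasureTheory Set Filter Real
open scoped ENNReal NNReal Topology

noncomputable def Ival (R : ℝ≥0∞) : Set ℝ := {r : ℝ | 0 < r ∧ ENNReal.ofReal r < R}

noncomputable def endFilter (R : ℝ≥0∞) : Filter ℝ :=
  if R = ⊤ then atTop else nhdsWithin R.toReal (Iio R.toReal)

noncomputable def lapA (α : ℝ) (u : ℝ → ℝ) : ℝ → ℝ :=
  fun r => deriv (deriv u) r + (α / r) * deriv u r

noncomputable def gradA (α : ℝ) (m : ℕ) (u : ℝ → ℝ) : ℝ → ℝ :=
  if Even m then (lapA α)^[m / 2] u else deriv ((lapA α)^[(m - 1) / 2] u)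

def MemD (m : ℕ) (p α : ℝ) (R : ℝ≥0∞) (u : ℝ → ℝ) : Prop :=
  ContDiff ℝ (m : ℕ∞) u ∧
  (∀ j < m, Filter.Tendsto (iteratedDeriv j u) (endFilter R) (nhds 0)) ∧
  IntegrableOn (fun r => |iteratedDeriv m u r| ^ p * r ^ α) (Ival R)

noncomputable def Sconst (m : ℕ) (p α θ pstar : ℝ) (R : ℝ≥0∞) : ℝ :=
  sInf {E : ℝ | ∃ u : ℝ → ℝ, MemD m p α R u ∧
    (∫ r in Ival R, |u r| ^ pstar * r ^ θ) = 1 ∧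
    E = ∫ r in Ival R, |gradA α m u r| ^ p * r ^ α}

theorem stmt2 (p q : ℝ) (hp : 1 < p) (hpq : p ≤ q) (m : ℕ) (hm : 0 < m)
    (R : ℝ≥0∞) (hR : 0 < R) (θ γ : ℝ) (hθ : -1 < θ)
    (h2 : γ - m * p + 1 > 0) (h1 : θ ≥ γ - m * p)
    (pstar : ℝ) (hps : pstar = (θ + 1) * p / (γ - m * p + 1)) :
    ∀ t : ℝ, t ∈ Ival R →
      (∫ r in Ioo (0:ℝ) t, (t - r) ^ (((m : ℝ) - 1) * pstar) * r ^ θ) ^ (1 / pstar) *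
        (∫ r in Ival R ∩ Ioi t, r ^ (-γ / (p - 1))) ^ ((p - 1) / p) ≤
        (θ + 1) ^ (-(1 / pstar)) * ((p - 1) / (γ - p + 1)) ^ ((p - 1) / p) := by
  intro t ht
  obtain ⟨ht0, htR⟩ := ht
  set e : ℝ := ((m : ℝ) - 1) * pstar with he_def
  set a : ℝ := -γ / (p - 1) with ha_def
  have hm1 : (1 : ℝ) ≤ (m : ℝ) := by exact_mod_cast hm
  have hp1 : (0 : ℝ) < p - 1 := by linarith
  have hθ1 : (0 : ℝ) < θ + 1 := by linarith
  have hmp : p ≤ (m : ℝ) * p := le_mul_of_one_le_left (by linarith) hm1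
  have hγp : (0 : ℝ) < γ - p + 1 := by linarith
  have hps0 : 0 < pstar := by rw [hps]; positivity
  have he0 : 0 ≤ e := mul_nonneg (by linarith) hps0.le
  have ha1 : a < -1 := by
    rw [ha_def, div_lt_iff₀ hp1]; linarith
  -- First integral bound
  have hint_rθ : IntegrableOn (fun r : ℝ => r ^ θ) (Ioo 0 t) := by
    have := intervalIntegral.intervalIntegrable_rpow' (a := 0) (b := t) hθ
    rw [intervalIntegrable_iff_integrableOn_Ioc_of_le ht0.le] at this
    exact this.mono_set Ioo_subset_Ioc_self
  have hint_g : IntegrableOn (fun r : ℝ => t ^ e * r ^ θ) (Ioo 0 t) :=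
    hint_rθ.const_mul _
  have hmeas_f : AEStronglyMeasurable (fun r : ℝ => (t - r) ^ e * r ^ θ)
      (volume.restrict (Ioo 0 t)) := by
    apply ContinuousOn.aestronglyMeasurable _ measurableSet_Ioo
    apply ContinuousOn.mul
    · exact (continuousOn_const.sub continuousOn_id).rpow_const
        fun r hr => Or.inl (sub_ne_zero.mpr hr.2.ne')
    · exact continuousOn_id.rpow_const fun r hr => Or.inl (ne_of_gt hr.1)
  have hbound : ∀ r ∈ Ioo (0:ℝ) t, (t - r) ^ e * r ^ θ ≤ t ^ e * r ^ θ := by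
    intro r hr
    apply mul_le_mul_of_nonneg_right _ (Real.rpow_nonneg hr.1.le _)
    exact Real.rpow_le_rpow (by linarith [hr.2]) (by linarith [hr.1]) he0
  have hint_f : IntegrableOn (fun r : ℝ => (t - r) ^ e * r ^ θ) (Ioo 0 t) := by
    apply Integrable.mono' hint_g hmeas_f
    filter_upwards [ae_restrict_mem measurableSet_Ioo] with r hr
    rw [Real.norm_eq_abs, abs_mul, abs_of_nonneg (Real.rpow_nonneg (by linarith [hr.2]) _),
      abs_of_nonneg (Real.rpow_nonneg hr.1.le _)]
    exact hbound r hr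
  have hI1val : (∫ r in Ioo (0:ℝ) t, t ^ e * r ^ θ) = (θ + 1)⁻¹ * t ^ (e + (θ + 1)) := by
    rw [MeasureTheory.integral_const_mul]
    have hv : (∫ r in Ioo (0:ℝ) t, r ^ θ) = t ^ (θ + 1) / (θ + 1) := by
      rw [← MeasureTheory.integral_Ioc_eq_integral_Ioo,
        ← intervalIntegral.integral_of_le ht0.le,
        integral_rpow (Or.inl hθ), Real.zero_rpow (by linarith)]
      ring
    rw [hv, Real.rpow_add ht0 e (θ + 1), div_eq_mul_inv, mul_comm ((θ + 1)⁻¹), mul_assoc]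
  have hI1 : (∫ r in Ioo (0:ℝ) t, (t - r) ^ e * r ^ θ) ≤ (θ + 1)⁻¹ * t ^ (e + (θ + 1)) := by
    rw [← hI1val]
    exact setIntegral_mono_on hint_f hint_g measurableSet_Ioo hbound
  -- Second integral bound
  have hint2 : IntegrableOn (fun r : ℝ => r ^ a) (Ioi t) :=
    integrableOn_Ioi_rpow_of_lt ha1 ht0
  have hI2val : (∫ r in Ioi t, r ^ a) = ((p - 1) / (γ - p + 1)) * t ^ (a + 1) := by
    rw [integral_Ioi_rpow_of_lt ha1 ht0]
    have hs : -t ^ (a + 1) / (a + 1) = (-(a + 1)⁻¹) * t ^ (a + 1) := by ring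
    have hc : -(a + 1)⁻¹ = (p - 1) / (γ - p + 1) := by
      have h : a + 1 = -((γ - p + 1) / (p - 1)) := by
        rw [ha_def]
        field_simp
        ring
      rw [h, inv_neg, neg_neg, inv_div]
    rw [hs, hc]
  have hI2 : (∫ r in Ival R ∩ Ioi t, r ^ a) ≤ ((p - 1) / (γ - p + 1)) * t ^ (a + 1) := by
    rw [← hI2val]
    apply setIntegral_mono_set hint2
    · filter_upwards [ae_restrict_mem measurableSet_Ioi] with r hr
      exact Real.rpow_nonneg (le_of_lt (ht0.trans hr)) _
    · exact Filter.Eventually.of_forall fun x hx => inter_subset_right hx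
  -- nonnegativity of LHS integrals
  have hIval_meas : MeasurableSet (Ival R) := by
    have hEq : Ival R = Ioi 0 ∩ (ENNReal.ofReal ⁻¹' Iio R) := rfl
    rw [hEq]
    exact measurableSet_Ioi.inter (ENNReal.measurable_ofReal measurableSet_Iio)
  have hI1nn : 0 ≤ ∫ r in Ioo (0:ℝ) t, (t - r) ^ e * r ^ θ := by
    apply setIntegral_nonneg measurableSet_Ioo
    intro r hr
    exact mul_nonneg (Real.rpow_nonneg (by linarith [hr.2]) _) (Real.rpow_nonneg hr.1.le _)
  have hI2nn : 0 ≤ ∫ r in Ival R ∩ Ioi t, r ^ a := by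
    apply setIntegral_nonneg (hIval_meas.inter measurableSet_Ioi)
    intro r hr
    exact Real.rpow_nonneg hr.1.1.le _
  -- raise to powers
  have hF1 : (∫ r in Ioo (0:ℝ) t, (t - r) ^ e * r ^ θ) ^ (1 / pstar) ≤
      (θ + 1) ^ (-(1 / pstar)) * t ^ ((e + (θ + 1)) * (1 / pstar)) := by
    calc (∫ r in Ioo (0:ℝ) t, (t - r) ^ e * r ^ θ) ^ (1 / pstar)
        ≤ ((θ + 1)⁻¹ * t ^ (e + (θ + 1))) ^ (1 / pstar) :=
          Real.rpow_le_rpow hI1nn hI1 (by positivity)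
      _ = (θ + 1) ^ (-(1 / pstar)) * t ^ ((e + (θ + 1)) * (1 / pstar)) := by
          rw [Real.mul_rpow (by positivity) (Real.rpow_nonneg ht0.le _),
            Real.inv_rpow hθ1.le, ← Real.rpow_neg hθ1.le, ← Real.rpow_mul ht0.le]
  have hF2 : (∫ r in Ival R ∩ Ioi t, r ^ a) ^ ((p - 1) / p) ≤
      ((p - 1) / (γ - p + 1)) ^ ((p - 1) / p) * t ^ ((a + 1) * ((p - 1) / p)) := by
    calc (∫ r in Ival R ∩ Ioi t, r ^ a) ^ ((p - 1) / p)
        ≤ (((p - 1) / (γ - p + 1)) * t ^ (a + 1)) ^ ((p - 1) / p) :=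
          Real.rpow_le_rpow hI2nn hI2 (by positivity)
      _ = ((p - 1) / (γ - p + 1)) ^ ((p - 1) / p) * t ^ ((a + 1) * ((p - 1) / p)) := by
          rw [Real.mul_rpow (by positivity) (Real.rpow_nonneg ht0.le _),
            ← Real.rpow_mul ht0.le]
  -- exponent identity
  have hXY : (e + (θ + 1)) * (1 / pstar) + (a + 1) * ((p - 1) / p) = 0 := by
    have hpn : p ≠ 0 := by linarith
    have hpn1 : p - 1 ≠ 0 := ne_of_gt hp1
    have hpsn : pstar ≠ 0 := ne_of_gt hps0
    have hden : γ - (m : ℝ) * p + 1 ≠ 0 := ne_of_gt h2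
    have hθn : θ + 1 ≠ 0 := ne_of_gt hθ1
    rw [he_def, ha_def, hps]
    field_simp
    ring
  -- combine
  calc (∫ r in Ioo (0:ℝ) t, (t - r) ^ e * r ^ θ) ^ (1 / pstar) *
        (∫ r in Ival R ∩ Ioi t, r ^ a) ^ ((p - 1) / p)
      ≤ ((θ + 1) ^ (-(1 / pstar)) * t ^ ((e + (θ + 1)) * (1 / pstar))) *
        (((p - 1) / (γ - p + 1)) ^ ((p - 1) / p) * t ^ ((a + 1) * ((p - 1) / p))) :=
        mul_le_mul hF1 hF2 (Real.rpow_nonneg hI2nn _)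
          (mul_nonneg (Real.rpow_nonneg hθ1.le _) (Real.rpow_nonneg ht0.le _))
    _ = ((θ + 1) ^ (-(1 / pstar)) * ((p - 1) / (γ - p + 1)) ^ ((p - 1) / p)) *
        (t ^ ((e + (θ + 1)) * (1 / pstar)) * t ^ ((a + 1) * ((p - 1) / p))) := by ring
    _ = ((θ + 1) ^ (-(1 / pstar)) * ((p - 1) / (γ - p + 1)) ^ ((p - 1) / p)) *
        t ^ ((e + (θ + 1)) * (1 / pstar) + (a + 1) * ((p - 1) / p)) := by
        rw [← Real.rpow_add ht0]
    _ = (θ + 1) ^ (-(1 / pstar)) * ((p - 1) / (γ - p + 1)) ^ ((p - 1) / p) := by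
        rw [hXY, Real.rpow_zero, mul_one]
end

section
/- Let p > 1, m a positive integer, 0 < R ≤ ∞, θ > -1, γ with γ - mp + 1 > 0, θ ≥ γ - mp, and p* := (θ+1)p/(γ-mp+1). Then the constant A_{m,1} := sup_{0<t<R} (∫_0^t r^θ dr)^{1/p*} (∫_t^R (r-t)^{p(m-1)/(p-1)} r^{-γ/(p-1)} dr)^{(p-1)/p} is finite and bounded above by (θ+1)^{-1/p*} ((p-1)/(γ-mp+1))^{(p-1)/p}. -/
open MeasureTheory Set Filter Real
open scoped ENNReal NNReal Topology

theorem stmt3 (p : ℝ) (hp : 1 < p) (m : ℕ) (hm : 0 < m)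
    (R : ℝ≥0∞) (hR : 0 < R) (θ γ : ℝ) (hθ : -1 < θ)
    (h2 : γ - m * p + 1 > 0) (h1 : θ ≥ γ - m * p)
    (pstar : ℝ) (hps : pstar = (θ + 1) * p / (γ - m * p + 1)) :
    ∀ t : ℝ, t ∈ Ival R →
      (∫ r in Ioo (0:ℝ) t, r ^ θ) ^ (1 / pstar) *
        (∫ r in Ival R ∩ Ioi t, (r - t) ^ (p * ((m : ℝ) - 1) / (p - 1)) * r ^ (-γ / (p - 1))) ^ ((p - 1) / p) ≤
        (θ + 1) ^ (-(1 / pstar)) * ((p - 1) / (γ - m * p + 1)) ^ ((p - 1) / p) := by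
  intro t ht
  obtain ⟨ht0, htR⟩ := ht
  have hp1 : 0 < p - 1 := by linarith
  have hpp : 0 < p := by linarith
  have hθ1 : 0 < θ + 1 := by linarith
  set c := γ - m * p + 1 with hc
  have hc0 : 0 < c := h2
  have hps0 : 0 < pstar := by rw [hps]; positivity
  set a1 := p * ((m : ℝ) - 1) / (p - 1) with ha1
  set a2 := -γ / (p - 1) with ha2
  have hm1 : (1:ℝ) ≤ (m:ℝ) := by exact_mod_cast hm
  have ha1nn : 0 ≤ a1 := by
    apply div_nonneg _ hp1.le
    nlinarith
  set β := c / (p - 1) with hβ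
  have hβ0 : 0 < β := by positivity
  have hsum : a1 + a2 = -β - 1 := by
    rw [ha1, ha2, hβ, hc]
    field_simp
    ring
  have hI1 : (∫ r in Ioo (0:ℝ) t, r ^ θ) = t ^ (θ + 1) / (θ + 1) := by
    rw [← MeasureTheory.integral_Ioc_eq_integral_Ioo,
        ← intervalIntegral.integral_of_le ht0.le,
        integral_rpow (Or.inl hθ),
        Real.zero_rpow (by positivity : θ + 1 ≠ 0)]
    ring
  have hmeasI : MeasurableSet (Ival R) := by
    have h : Ival R = Ioi 0 ∩ ENNReal.ofReal ⁻¹' (Iio R) := rfl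
    rw [h]
    exact measurableSet_Ioi.inter
      (ENNReal.continuous_ofReal.measurable measurableSet_Iio)
  set S := Ival R ∩ Ioi t with hS
  have hmeasS : MeasurableSet S := hmeasI.inter measurableSet_Ioi
  have hgint : IntegrableOn (fun r : ℝ => r ^ (-β - 1)) (Ioi t) :=
    integrableOn_Ioi_rpow_of_lt (by linarith) ht0
  have hle : (∫ r in S, (r - t) ^ a1 * r ^ a2) ≤ ∫ r in Ioi t, r ^ (-β - 1) := by
    rw [← integral_indicator hmeasS, ← integral_indicator measurableSet_Ioi]
    apply integral_mono_of_nonneg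
    · filter_upwards with r
      apply Set.indicator_nonneg
      intro r hr
      have h1r : 0 < r := hr.1.1
      have h2r : t < r := hr.2
      have h3r : 0 < r - t := by linarith
      positivity
    · exact (integrable_indicator_iff measurableSet_Ioi).mpr hgint
    · filter_upwards with r
      by_cases hrS : r ∈ S
      · have hrt : t < r := hrS.2
        have h0r : 0 < r := lt_trans ht0 hrt
        rw [Set.indicator_of_mem hrS, Set.indicator_of_mem (show r ∈ Ioi t from hrt)]
        calc (r - t) ^ a1 * r ^ a2
            ≤ r ^ a1 * r ^ a2 := by
              apply mul_le_mul_of_nonneg_right _ (Real.rpow_nonneg h0r.le _)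
              exact Real.rpow_le_rpow (by linarith) (by linarith) ha1nn
          _ = r ^ (a1 + a2) := (Real.rpow_add h0r _ _).symm
          _ = r ^ (-β - 1) := by rw [hsum]
      · rw [Set.indicator_of_notMem hrS]
        apply Set.indicator_nonneg
        intro r hr
        have h0r : 0 < r := lt_trans ht0 hr
        positivity
  have hJ : (∫ r in Ioi t, r ^ (-β - 1)) = t ^ (-β) * ((p - 1) / c) := by
    rw [integral_Ioi_rpow_of_lt (by linarith) ht0]
    have h : -β - 1 + 1 = -β := by ring
    rw [h, hβ]
    field_simp
  have hI2nn : 0 ≤ ∫ r in S, (r - t) ^ a1 * r ^ a2 := by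
    apply setIntegral_nonneg hmeasS
    intro r hr
    have h1r : 0 < r := hr.1.1
    have h2r : t < r := hr.2
    have h3r : 0 < r - t := by linarith
    positivity
  have key : (∫ r in S, (r - t) ^ a1 * r ^ a2) ^ ((p - 1) / p)
      ≤ (t ^ (-β) * ((p - 1) / c)) ^ ((p - 1) / p) :=
    Real.rpow_le_rpow hI2nn (hle.trans_eq hJ) (by positivity)
  have e1 : (θ + 1) * (1 / pstar) = c / p := by
    rw [hps]
    field_simp
  have e2 : -β * ((p - 1) / p) = -(c / p) := by
    rw [hβ]
    field_simp
  have heq : (t ^ (θ + 1) / (θ + 1)) ^ (1 / pstar) * (t ^ (-β) * ((p - 1) / c)) ^ ((p - 1) / p)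
      = (θ + 1) ^ (-(1 / pstar)) * ((p - 1) / c) ^ ((p - 1) / p) := by
    rw [Real.div_rpow (Real.rpow_nonneg ht0.le _) hθ1.le,
        Real.mul_rpow (Real.rpow_nonneg ht0.le _) (by positivity),
        ← Real.rpow_mul ht0.le, ← Real.rpow_mul ht0.le, e1, e2,
        Real.rpow_neg hθ1.le, Real.rpow_neg ht0.le]
    have h1 : (t : ℝ) ^ (c / p) ≠ 0 := by positivity
    have h2 : (θ + 1 : ℝ) ^ (1 / pstar) ≠ 0 := by positivity
    field_simp
  rw [hI1]
  calc (t ^ (θ + 1) / (θ + 1)) ^ (1 / pstar) * (∫ r in S, (r - t) ^ a1 * r ^ a2) ^ ((p - 1) / p)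
      ≤ (t ^ (θ + 1) / (θ + 1)) ^ (1 / pstar) * (t ^ (-β) * ((p - 1) / c)) ^ ((p - 1) / p) :=
        mul_le_mul_of_nonneg_left key (Real.rpow_nonneg (by positivity) _)
    _ = (θ + 1) ^ (-(1 / pstar)) * ((p - 1) / c) ^ ((p - 1) / p) := heq
end
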